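/- Every prismatic graph in the class F_9 admits a hitting set of its triangles of cardinality at most 3; indeed {r^3_2, r^3_3, s^1_1} is such a hitting set. -/

import Mathlib

/-!
A triangle of Σ either lies in one tile, where it is a transversal (pairwise distinct rows and
columns), or is a rainbow triple r^a_b, s^b_c, t^c_a: two adjacent vertices of one tile have
distinct rows and distinct columns, so no vertex of another tile sees both. In a graph of F₉
the tile t has no vertex in column 1, so it contains no transversal and every rainbow triangle
has a ≠ 1. A transversal of r must use r²₁ and then r³₂ or r³₃; a transversal of s must use
s¹₁. A rainbow triangle with a = 2 is r²₁, s¹₁, t¹₂; one with a = 3 contains r³₂ or r³₃,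
or else r³₁ and then s¹₁. Finally, the neighbours of z outside {r³₂, r³₃, s¹₁} lie among
t²₂, t³₂, which share a column and so are not adjacent.
-/

/-- A graph is prismatic if for every triangle, every vertex not in the triangle
has exactly one neighbour in the triangle. -/
def Prismatic {V : Type*} (G : SimpleGraph V) : Prop :=
  ∀ a b c v : V, G.Adj a b → G.Adj a c → G.Adj b c →
    v ≠ a → v ≠ b → v ≠ c → ∃! u, u ∈ ({a, b, c} : Set V) ∧ G.Adj v u

/-- The complement of the Schläfli graph: vertices are triples (tile, line, column);
tile 0 holds the vertices r^i_j, tile 1 the vertices s^i_j, tile 2 the vertices t^i_j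
(indices shifted to start at 0). -/
def SchlafliC : SimpleGraph (Fin 3 × Fin 3 × Fin 3) where
  Adj x y :=
    (x.1 = y.1 ∧ x.2.1 ≠ y.2.1 ∧ x.2.2 ≠ y.2.2) ∨
    (y.1 = x.1 + 1 ∧ x.2.2 = y.2.1) ∨
    (x.1 = y.1 + 1 ∧ y.2.2 = x.2.1)
  symm := by
    constructor
    rintro x y (⟨h1, h2, h3⟩ | ⟨h1, h2⟩ | ⟨h1, h2⟩)
    · exact Or.inl ⟨h1.symm, Ne.symm h2, Ne.symm h3⟩
    · exact Or.inr (Or.inr ⟨h1, h2⟩)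
    · exact Or.inr (Or.inl ⟨h1, h2⟩)
  loopless := by
    constructor
    rintro x (⟨h1, h2, h3⟩ | ⟨h1, h2⟩ | ⟨h1, h2⟩)
    · exact h2 rfl
    · exact absurd h1 (by simp [Fin.ext_iff])
    · exact absurd h1 (by simp [Fin.ext_iff])

/-- The vertex set of an induced subgraph of Σ given by index sets I₁, I₂, I₃
(for the tiles r, s, t respectively; indices are 0-based). -/
def SigmaSubset (I₁ I₂ I₃ : Set (Fin 3 × Fin 3)) : Set (Fin 3 × Fin 3 × Fin 3) :=
  {x | (x.1 = 0 ∧ (x.2.1, x.2.2) ∈ I₁) ∨ (x.1 = 1 ∧ (x.2.1, x.2.2) ∈ I₂) ∨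
       (x.1 = 2 ∧ (x.2.1, x.2.2) ∈ I₃)}

namespace SimpleGraph

variable {V : Type*}

def IsTriangleHittingSet (G : SimpleGraph V) (S : Set V) : Prop :=
  ∀ p q r, G.Adj p q → G.Adj p r → G.Adj q r → p ∈ S ∨ q ∈ S ∨ r ∈ S

theorem isTriangleHittingSet_of_sum_unit {G : SimpleGraph (V ⊕ Unit)} {S : Set (V ⊕ Unit)}
    (hV : (G.comap Sum.inl).IsTriangleHittingSet (Sum.inl ⁻¹' S))
    (hz : ∀ u v, G.Adj (.inl u) (.inl v) → G.Adj (.inl u) (.inr ()) →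
      G.Adj (.inl v) (.inr ()) → Sum.inl u ∈ S ∨ Sum.inl v ∈ S) :
    G.IsTriangleHittingSet S := by
  rintro (u | ⟨⟨⟩⟩) (v | ⟨⟨⟩⟩) (w | ⟨⟨⟩⟩) huv huw hvw
  · exact hV u v w huv huw hvw
  · exact (hz u v huv huw hvw).imp_right Or.inl
  · exact (hz u w huw huv hvw.symm).imp_right Or.inr
  · exact absurd hvw (G.loopless.irrefl _)
  · exact Or.inr (hz v w hvw huv.symm huw.symm)
  · exact absurd huw (G.loopless.irrefl _)
  · exact absurd huv (G.loopless.irrefl _)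
  · exact absurd huv (G.loopless.irrefl _)

end SimpleGraph

instance : DecidableRel SchlafliC.Adj := fun _ _ => inferInstanceAs (Decidable (_ ∨ _ ∨ _))

theorem sigmaSubset_mono {I₁ I₂ I₃ J₁ J₂ J₃ : Set (Fin 3 × Fin 3)} (h₁ : I₁ ⊆ J₁) (h₂ : I₂ ⊆ J₂)
    (h₃ : I₃ ⊆ J₃) : SigmaSubset I₁ I₂ I₃ ⊆ SigmaSubset J₁ J₂ J₃ := by
  rintro x (⟨hx, hI⟩ | ⟨hx, hI⟩ | ⟨hx, hI⟩)
  exacts [.inl ⟨hx, h₁ hI⟩, .inr (.inl ⟨hx, h₂ hI⟩), .inr (.inr ⟨hx, h₃ hI⟩)]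

/-- Σ without the vertices r¹₁, r²₂, r²₃, s¹₂, s¹₃ and the column t^i₁ excluded in F₉. -/
def f9Vertices : Set (Fin 3 × Fin 3 × Fin 3) :=
  SigmaSubset {(0, 0), (1, 1), (1, 2)}ᶜ {(0, 1), (0, 2)}ᶜ {p | p.2 ≠ 0}

instance : DecidablePred (· ∈ f9Vertices) := fun _ => by
  unfold f9Vertices SigmaSubset; infer_instance

theorem sigmaSubset_subset_f9Vertices {I₁ I₂ I₃ : Set (Fin 3 × Fin 3)}
    (h₁ : (0, 0) ∉ I₁ ∧ (1, 1) ∉ I₁ ∧ (1, 2) ∉ I₁) (h₂ : (0, 1) ∉ I₂ ∧ (0, 2) ∉ I₂)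
    (h₃ : (0, 0) ∉ I₃ ∧ (1, 0) ∉ I₃ ∧ (2, 0) ∉ I₃) :
    SigmaSubset I₁ I₂ I₃ ⊆ f9Vertices := by
  refine sigmaSubset_mono ?_ ?_ ?_
  · rintro p hp (rfl | rfl | rfl) <;> tauto
  · rintro p hp (rfl | rfl) <;> tauto
  · rintro ⟨i, j⟩ hp (rfl : j = 0)
    fin_cases i <;> tauto

/-- {r³₂, r³₃, s¹₁} -/
def f9HittingSet : Finset (Fin 3 × Fin 3 × Fin 3) := {(0, 2, 1), (0, 2, 2), (1, 0, 0)}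

/-- The possible neighbours r³₂, r³₃, s¹₁, t²₂, t³₂ of the new vertex z. -/
def f9ApexNeighbours : Set (Fin 3 × Fin 3 × Fin 3) :=
  {(0, 2, 1), (0, 2, 2), (1, 0, 0), (2, 1, 1), (2, 2, 1)}

instance : DecidablePred (· ∈ f9ApexNeighbours) := fun _ => by
  unfold f9ApexNeighbours; infer_instance

set_option synthInstance.maxSize 4000 in
theorem SchlafliC.triangle_meets_f9HittingSet :
    ∀ x ∈ f9Vertices, ∀ y ∈ f9Vertices, ∀ w ∈ f9Vertices,
      SchlafliC.Adj x y → SchlafliC.Adj x w → SchlafliC.Adj y w →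
      x ∈ f9HittingSet ∨ y ∈ f9HittingSet ∨ w ∈ f9HittingSet := by
  decide

set_option synthInstance.maxSize 4000 in
theorem SchlafliC.edge_meets_f9HittingSet_of_mem_f9ApexNeighbours :
    ∀ x ∈ f9ApexNeighbours, ∀ y ∈ f9ApexNeighbours,
      SchlafliC.Adj x y → x ∈ f9HittingSet ∨ y ∈ f9HittingSet := by
  decide

theorem class_F9_hitting_card_le_three_general (I₁ I₂ I₃ : Set (Fin 3 × Fin 3))
    (hI₁ : (1, 0) ∈ I₁ ∧ (2, 0) ∈ I₁ ∧ (2, 1) ∈ I₁ ∧ (2, 2) ∈ I₁ ∧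
      ((0, 1) ∈ I₁ ∨ (0, 2) ∈ I₁) ∧ (0, 0) ∉ I₁ ∧ (1, 1) ∉ I₁ ∧ (1, 2) ∉ I₁)
    (hI₂ : (0, 0) ∈ I₂ ∧ (1, 1) ∈ I₂ ∧ (2, 2) ∈ I₂ ∧ (0, 1) ∉ I₂ ∧ (0, 2) ∉ I₂)
    (hI₃ : (0, 2) ∈ I₃ ∧ (1, 2) ∈ I₃ ∧ (2, 2) ∈ I₃ ∧
      ((0, 1) ∈ I₃ ∨ (1, 1) ∈ I₃ ∨ (2, 1) ∈ I₃) ∧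
      (0, 0) ∉ I₃ ∧ (1, 0) ∉ I₃ ∧ (2, 0) ∉ I₃)
    (G : SimpleGraph (SigmaSubset I₁ I₂ I₃ ⊕ Unit))
    (hAdjUU : ∀ u v : SigmaSubset I₁ I₂ I₃,
      G.Adj (Sum.inl u) (Sum.inl v) ↔ SchlafliC.Adj u.1 v.1)
    (hAdjz : ∀ u : SigmaSubset I₁ I₂ I₃,
      G.Adj (Sum.inl u) (Sum.inr ()) ↔
        u.1 ∈ ({((0, 2, 1) : Fin 3 × Fin 3 × Fin 3), (0, 2, 2), (1, 0, 0),
          (2, 1, 1), (2, 2, 1)} : Set (Fin 3 × Fin 3 × Fin 3))) :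
    ∃ S : Finset (SigmaSubset I₁ I₂ I₃ ⊕ Unit), S.card ≤ 3 ∧
      (∀ w : SigmaSubset I₁ I₂ I₃ ⊕ Unit, w ∈ S ↔
        ∃ u : SigmaSubset I₁ I₂ I₃, w = Sum.inl u ∧
          u.1 ∈ ({((0, 2, 1) : Fin 3 × Fin 3 × Fin 3), (0, 2, 2), (1, 0, 0)} :
            Set (Fin 3 × Fin 3 × Fin 3))) ∧
      ∀ p q r : SigmaSubset I₁ I₂ I₃ ⊕ Unit, G.Adj p q → G.Adj p r → G.Adj q r →
        (p ∈ S ∨ q ∈ S ∨ r ∈ S) := by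
  classical
  have hV (u : SigmaSubset I₁ I₂ I₃) : u.1 ∈ f9Vertices :=
    sigmaSubset_subset_f9Vertices hI₁.2.2.2.2.2 hI₂.2.2.2 hI₃.2.2.2.2 u.2
  let S : Finset (SigmaSubset I₁ I₂ I₃ ⊕ Unit) :=
    (f9HittingSet.subtype (· ∈ SigmaSubset I₁ I₂ I₃)).map .inl
  have hS (u) : Sum.inl u ∈ S ↔ u.1 ∈ f9HittingSet := by simp [S]
  refine ⟨S, ?_, ?_, SimpleGraph.isTriangleHittingSet_of_sum_unit ?_ ?_⟩
  · exact (Finset.card_map _).trans_le <| (Finset.card_subtype _ _).trans_le <|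
      (Finset.card_filter_le _ _).trans_eq rfl
  · rintro (u | ⟨⟨⟩⟩)
    · simp [hS, f9HittingSet]
    · simp [S]
  · intro u v w huv huw hvw
    exact SchlafliC.triangle_meets_f9HittingSet _ (hV u) _ (hV v) _ (hV w) ((hAdjUU u v).1 huv)
      ((hAdjUU u w).1 huw) ((hAdjUU v w).1 hvw) |>.imp (hS u).2 (.imp (hS v).2 (hS w).2)
  · intro u v huv hu hv
    exact SchlafliC.edge_meets_f9HittingSet_of_mem_f9ApexNeighbours _ ((hAdjz u).1 hu) _
      ((hAdjz v).1 hv) ((hAdjUU u v).1 huv) |>.imp (hS u).2 (hS v).2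

/-- Every prismatic graph in the class F₉ admits a hitting set of its triangles of
cardinality at most 3; indeed {r³₂, r³₃, s¹₁} = {(0,2,1),(0,2,2),(1,0,0)} is such a
hitting set (0-based indices; the paper's indices are 1-based).  G is obtained from the
subgraph of Σ induced on the vertices given by I₁, I₂, I₃ by adding a new vertex z
(the summand Unit) adjacent to r³₂, r³₃, s¹₁, to t²₂ = (2,1,1) if (1,1) ∈ I₃, and to
t³₂ = (2,2,1) if (2,1) ∈ I₃. -/
theorem class_F9_hitting_card_le_three (I₁ I₂ I₃ : Set (Fin 3 × Fin 3))
    (hI₁ : (1, 0) ∈ I₁ ∧ (2, 0) ∈ I₁ ∧ (2, 1) ∈ I₁ ∧ (2, 2) ∈ I₁ ∧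
      ((0, 1) ∈ I₁ ∨ (0, 2) ∈ I₁) ∧ (0, 0) ∉ I₁ ∧ (1, 1) ∉ I₁ ∧ (1, 2) ∉ I₁)
    (hI₂ : (0, 0) ∈ I₂ ∧ (1, 1) ∈ I₂ ∧ (2, 2) ∈ I₂ ∧ (0, 1) ∉ I₂ ∧ (0, 2) ∉ I₂)
    (hI₃ : (0, 2) ∈ I₃ ∧ (1, 2) ∈ I₃ ∧ (2, 2) ∈ I₃ ∧
      ((0, 1) ∈ I₃ ∨ (1, 1) ∈ I₃ ∨ (2, 1) ∈ I₃) ∧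
      (0, 0) ∉ I₃ ∧ (1, 0) ∉ I₃ ∧ (2, 0) ∉ I₃)
    (hlast : ((0, 1) ∈ I₁ ∧ (0, 2) ∈ I₁) ∨
      ((0, 1) ∈ I₃ ∧ ((1, 1) ∈ I₃ ∨ (2, 1) ∈ I₃)))
    (G : SimpleGraph (SigmaSubset I₁ I₂ I₃ ⊕ Unit))
    (hAdjUU : ∀ u v : SigmaSubset I₁ I₂ I₃,
      G.Adj (Sum.inl u) (Sum.inl v) ↔ SchlafliC.Adj u.1 v.1)
    (hAdjz : ∀ u : SigmaSubset I₁ I₂ I₃,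
      G.Adj (Sum.inl u) (Sum.inr ()) ↔
        u.1 ∈ ({((0, 2, 1) : Fin 3 × Fin 3 × Fin 3), (0, 2, 2), (1, 0, 0),
          (2, 1, 1), (2, 2, 1)} : Set (Fin 3 × Fin 3 × Fin 3)))
    (hG : Prismatic G) :
    ∃ S : Finset (SigmaSubset I₁ I₂ I₃ ⊕ Unit), S.card ≤ 3 ∧
      (∀ w : SigmaSubset I₁ I₂ I₃ ⊕ Unit, w ∈ S ↔
        ∃ u : SigmaSubset I₁ I₂ I₃, w = Sum.inl u ∧
          u.1 ∈ ({((0, 2, 1) : Fin 3 × Fin 3 × Fin 3), (0, 2, 2), (1, 0, 0)} :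
            Set (Fin 3 × Fin 3 × Fin 3))) ∧
      ∀ p q r : SigmaSubset I₁ I₂ I₃ ⊕ Unit, G.Adj p q → G.Adj p r → G.Adj q r →
        (p ∈ S ∨ q ∈ S ∨ r ∈ S) :=
  class_F9_hitting_card_le_three_general I₁ I₂ I₃ hI₁ hI₂ hI₃ G hAdjUU hAdjz
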